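/- In BS(1,2), for every n > 100, the element represented by w = t^n a² t^{-n} lies on the sphere of radius R = 2n+2, the element u = a t^n a² t^{-(n-1)} lies on the same sphere, d(w,u) = 2, and every path from w to u inside the ball B(R) has length greater than R − 8. Consequently BS(1,2) does not satisfy Poénaru's condition P(2) with respect to {a,a⁻¹,t,t⁻¹}. -/

import Mathlib

def bsRel (q : ℤ) : Set (FreeGroup Bool) :=
  {FreeGroup.of true * FreeGroup.of false * (FreeGroup.of true)⁻¹ *
    (FreeGroup.of false ^ q)⁻¹}

abbrev BS (q : ℤ) := PresentedGroup (bsRel q)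

def bsA (q : ℤ) : BS q := PresentedGroup.of false

def bsT (q : ℤ) : BS q := PresentedGroup.of true

def evalWord (q : ℤ) (w : List (Bool × Bool)) : BS q :=
  PresentedGroup.mk (bsRel q) (FreeGroup.mk w)

/-- `g` lies in the ball of radius `r` about the identity of `BS(1,q)`. -/
def InBall (q : ℤ) (g : BS q) (r : ℕ) : Prop :=
  ∃ v : List (Bool × Bool), evalWord q v = g ∧ v.length ≤ r

/-- `g` lies on the sphere of radius `r` about the identity of `BS(1,q)`. -/
def OnSphere (q : ℤ) (g : BS q) (r : ℕ) : Prop :=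
  InBall q g r ∧ ¬ InBall q g (r - 1)

/-- `δ` labels a path from `x` to `y` staying in the ball of radius `r`. -/
def IsPathInBall (q : ℤ) (x y : BS q) (r : ℕ) (δ : List (Bool × Bool)) : Prop :=
  x * evalWord q δ = y ∧ ∀ k : ℕ, InBall q (x * evalWord q (δ.take k)) r

/-- Poénaru's condition `P(2)` for `BS(1,q)` with respect to `{a,a⁻¹,t,t⁻¹}`:
there are a sublinear function `f` and a radius `r₀` such that any two points
of the sphere `S(r)`, `r ≥ r₀`, at distance at most 2 are joined by a path
inside `B(r)` of length at most `f(r)`. -/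
def PropertyP2 (q : ℤ) : Prop :=
  ∃ f : ℕ → ℝ,
    (∀ C : ℝ, 0 < C →
        Filter.Tendsto (fun r : ℕ => (r : ℝ) - C * f r) Filter.atTop
          Filter.atTop) ∧
    ∃ r₀ : ℕ, ∀ r : ℕ, r₀ ≤ r → ∀ x y : BS q, OnSphere q x r → OnSphere q y r →
      (∃ γ : List (Bool × Bool), γ.length ≤ 2 ∧ x * evalWord q γ = y) →
      ∃ δ : List (Bool × Bool), IsPathInBall q x y r δ ∧ (δ.length : ℝ) ≤ f r

/-!
Let `BS(1,2)` act on `ℚ` by `a : x ↦ x + 1` and `t : x ↦ 2x`. A word `v` then acts as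
`x ↦ 2^k x + m` with `m = ∑ ±2^ℓ`, one term for each letter `a^{±1}`, where `ℓ ≤ #t(v)` is the
number of `t`-letters minus the number of `t⁻¹`-letters read before it. If `k ≤ 0` then
`#a + 2·#t ≤ |v|`, and if moreover `m ∉ 2ℤ` some term has `ℓ ≤ 0` and contributes at most `1`;
on the ball `B(2n+2)` this gives `|m| ≤ 3·2^(n-1) + 1`. So `w·a = u·t⁻¹ = a^(2^(n+1)+1)` lies
outside `B(2n+2)`, which puts `w = a^(2^(n+1))` and `u = w·a·t` on the sphere `S(2n+2)`.
Along a path from `w` to `u` the value of `m` goes from `2^(n+1) ∈ 2ℤ` to `2^(n+1) + 1 ∉ 2ℤ`; it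
first leaves `2ℤ` through a letter `a^{±1}` read at `k ≤ 0`, at a point of `B(2n+2)`, hence with
`|m| ≤ 3·2^(n-1) + 1`. A path with `|δ| ≤ 2n - 6` has `#a + 2·#t ≤ 2n - 5` and moves `m` by at
most `3·2^(n-4)`, which is too little.
-/

open AddSubgroup

/-- `⟨m, k⟩` is the affine map `x ↦ 2 ^ k * x + m` of `ℚ`; the product is composition. -/
@[ext] structure Aff2 where
  m : ℚ
  k : ℤ

namespace Aff2

instance : Mul Aff2 := ⟨fun g h => ⟨g.m + 2 ^ g.k * h.m, g.k + h.k⟩⟩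
instance : One Aff2 := ⟨⟨0, 0⟩⟩
instance : Inv Aff2 := ⟨fun g => ⟨-(2 ^ (-g.k) * g.m), -g.k⟩⟩

@[simp] lemma mul_m (g h : Aff2) : (g * h).m = g.m + 2 ^ g.k * h.m := rfl
@[simp] lemma mul_k (g h : Aff2) : (g * h).k = g.k + h.k := rfl
@[simp] lemma one_m : (1 : Aff2).m = 0 := rfl
@[simp] lemma one_k : (1 : Aff2).k = 0 := rfl
@[simp] lemma inv_m (g : Aff2) : g⁻¹.m = -(2 ^ (-g.k) * g.m) := rfl
@[simp] lemma inv_k (g : Aff2) : g⁻¹.k = -g.k := rfl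

instance : Group Aff2 where
  mul_assoc g h l := by
    ext <;> simp [zpow_add₀ (two_ne_zero (α := ℚ))] <;> ring
  one_mul g := by ext <;> simp
  mul_one g := by ext <;> simp
  inv_mul_cancel g := by ext <;> simp

def letter : Bool × Bool → Aff2
  | (false, b) => ⟨if b then 1 else -1, 0⟩
  | (true, b) => ⟨0, if b then 1 else -1⟩

def word (v : List (Bool × Bool)) : Aff2 := (v.map letter).prod

@[simp] lemma word_nil : word [] = 1 := rfl

@[simp] lemma word_cons (x : Bool × Bool) (v : List (Bool × Bool)) :
    word (x :: v) = letter x * word v := List.prod_cons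

@[simp] lemma word_append (v v' : List (Bool × Bool)) :
    word (v ++ v') = word v * word v' := by
  simp [word]

end Aff2

open Aff2

def countA (v : List (Bool × Bool)) : ℕ := v.countP (fun x => !x.1)

def countT (v : List (Bool × Bool)) : ℕ := v.count (true, true)

def countTInv (v : List (Bool × Bool)) : ℕ := v.count (true, false)

lemma countA_add_countT_add_countTInv (v : List (Bool × Bool)) :
    countA v + countT v + countTInv v = v.length := by
  induction v with
  | nil => rfl
  | cons x v ih =>
    obtain ⟨_ | _, _ | _⟩ := x <;>
      simp [countA, countT, countTInv] at ih ⊢ <;> omega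

lemma word_k (v : List (Bool × Bool)) : (word v).k = countT v - countTInv v := by
  induction v with
  | nil => rfl
  | cons x v ih =>
    obtain ⟨_ | _, _ | _⟩ := x <;>
      simp [countT, countTInv, letter] at ih ⊢ <;> linarith

lemma abs_word_m_le (v : List (Bool × Bool)) :
    |(word v).m| ≤ ((countA v * 2 ^ countT v : ℕ) : ℚ) := by
  induction v with
  | nil => simp
  | cons x v ih =>
    have h1 : (1 : ℚ) ≤ 2 ^ countT v := one_le_pow₀ one_le_two
    push_cast at ih
    obtain ⟨_ | _, _ | _⟩ := x <;>
      simp only [countA, countT, List.countP_cons, List.count_cons] at h1 ih ⊢ <;>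
      simp [letter, abs_mul] at h1 ih ⊢
    · linarith [abs_add_le (-1 : ℚ) (word v).m, abs_neg (1 : ℚ), abs_one (α := ℚ)]
    · linarith [abs_add_le (1 : ℚ) (word v).m, abs_one (α := ℚ)]
    · linarith [abs_nonneg (word v).m]
    · rw [pow_succ]; linarith

lemma two_zpow_mem_zmultiples_two_iff (j : ℤ) :
    (2 : ℚ) ^ j ∈ zmultiples (2 : ℚ) ↔ 0 < j := by
  constructor
  · rw [mem_zmultiples_iff]
    rintro ⟨z, hz⟩
    by_contra! hj
    have hpos : (0 : ℚ) < z * 2 := by rw [← zsmul_eq_mul, hz]; positivity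
    have hle : (z : ℚ) * 2 ≤ 1 := by
      rw [← zsmul_eq_mul, hz]; exact zpow_le_one_of_nonpos₀ one_le_two hj
    have hz0 : (0 : ℤ) < z := by exact_mod_cast (by linarith : (0 : ℚ) < z)
    have hz1 : (1 : ℚ) ≤ z := by exact_mod_cast hz0
    linarith
  · intro hj
    obtain ⟨i, rfl⟩ : ∃ i : ℕ, j = i + 1 := ⟨j.toNat - 1, by omega⟩
    exact ⟨2 ^ i, by simp [zpow_add₀, zpow_natCast]⟩

lemma one_not_mem_zmultiples_two : (1 : ℚ) ∉ zmultiples (2 : ℚ) := by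
  simpa using (two_zpow_mem_zmultiples_two_iff 0).not.2 (lt_irrefl 0)

lemma two_pow_succ_mem_zmultiples_two (n : ℕ) : (2 : ℚ) ^ (n + 1) ∈ zmultiples (2 : ℚ) :=
  ⟨2 ^ n, by simp [pow_succ]⟩

lemma exists_first_odd_letter {v : List (Bool × Bool)} (hv : (word v).m ∉ zmultiples (2 : ℚ)) :
    ∃ p b s, v = p ++ (false, b) :: s ∧ (word p).k ≤ 0 ∧
      (word (p ++ [(false, b)])).m ∉ zmultiples (2 : ℚ) := by
  induction v using List.reverseRecOn with
  | nil => simp at hv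
  | append_singleton v y ih =>
    by_cases hev : (word v).m ∈ zmultiples (2 : ℚ)
    · obtain ⟨_ | _, b⟩ := y
      · refine ⟨v, b, [], rfl, ?_, hv⟩
        by_contra! hk
        have h2 := (two_zpow_mem_zmultiples_two_iff _).2 hk
        cases b <;> simp [letter] at hv
        · exact hv (add_mem hev (neg_mem h2))
        · exact hv (add_mem hev h2)
      · cases b <;> simp [letter] at hv <;> exact absurd hev hv
    · obtain ⟨p, b, s, rfl, hk, hodd⟩ := ih hev
      exact ⟨p, b, s ++ [y], by simp, hk, hodd⟩

lemma abs_word_m_add_le_of_not_mem {v : List (Bool × Bool)}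
    (hv : (word v).m ∉ zmultiples (2 : ℚ)) :
    |(word v).m| + 2 ^ countT v ≤ countA v * 2 ^ countT v + 1 := by
  obtain ⟨p, b, s, rfl, hk, -⟩ := exists_first_odd_letter hv
  have hm : |(word (p ++ (false, b) :: s)).m| ≤ |(word p).m| + (1 + |(word s).m|) := by
    have hsign : |(letter (false, b)).m| = 1 := by cases b <;> simp [letter]
    have h2k : (2 : ℚ) ^ (word p).k ≤ 1 := zpow_le_one_of_nonpos₀ one_le_two hk
    calc |(word (p ++ (false, b) :: s)).m|
        = |(word p).m + 2 ^ (word p).k * ((letter (false, b)).m + (word s).m)| := by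
          simp [letter]
      _ ≤ |(word p).m| + 2 ^ (word p).k * |(letter (false, b)).m + (word s).m| :=
          (abs_add_le _ _).trans_eq (by rw [abs_mul, abs_zpow, abs_two])
      _ ≤ |(word p).m| + (1 + |(word s).m|) := by
          gcongr
          calc 2 ^ (word p).k * |(letter (false, b)).m + (word s).m|
              ≤ 1 * |(letter (false, b)).m + (word s).m| := by gcongr
            _ ≤ 1 + |(word s).m| := by rw [one_mul, ← hsign]; exact abs_add_le _ _
  have hA : countA (p ++ (false, b) :: s) = countA p + countA s + 1 := by
    simp [countA]; ring
  have hT : countT (p ++ (false, b) :: s) = countT p + countT s := by simp [countT]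
  have hp := abs_word_m_le p
  have hs := abs_word_m_le s
  have hX : (1 : ℚ) ≤ 2 ^ countT p := one_le_pow₀ one_le_two
  have hY : (1 : ℚ) ≤ 2 ^ countT s := one_le_pow₀ one_le_two
  rw [hA, hT, pow_add]
  push_cast at hp hs ⊢
  nlinarith [abs_nonneg (word p).m, abs_nonneg (word s).m]

lemma mul_two_pow_le_of_add_two_mul_le {a U n : ℕ} (h : a + 2 * U ≤ 2 * n + 3) :
    a * 2 ^ U ≤ 3 * 2 ^ n := by
  induction U generalizing a n with
  | zero =>
    have := Nat.lt_two_pow_self (n := n)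
    have := Nat.one_le_two_pow (n := n)
    omega
  | succ U ih =>
    rcases n with _ | n
    · obtain rfl : U = 0 := by omega
      omega
    · have := ih (a := a) (n := n) (by omega)
      rw [pow_succ, pow_succ, ← mul_assoc]
      omega

section Ball

variable {q : ℤ}

lemma evalWord_append (v v' : List (Bool × Bool)) :
    evalWord q (v ++ v') = evalWord q v * evalWord q v' := by
  simp [evalWord, ← FreeGroup.mul_mk]

lemma InBall.mono {g : BS q} {r s : ℕ} (hg : InBall q g r) (hrs : r ≤ s) : InBall q g s :=
  let ⟨v, hv, hlen⟩ := hg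
  ⟨v, hv, hlen.trans hrs⟩

lemma InBall.mul {g h : BS q} {r s : ℕ} (hg : InBall q g r) (hh : InBall q h s) :
    InBall q (g * h) (r + s) := by
  obtain ⟨v, rfl, hv⟩ := hg
  obtain ⟨v', rfl, hv'⟩ := hh
  exact ⟨v ++ v', evalWord_append v v', by simp; omega⟩

lemma InBall.inv {g : BS q} {r : ℕ} (hg : InBall q g r) : InBall q g⁻¹ r := by
  obtain ⟨v, rfl, hv⟩ := hg
  exact ⟨FreeGroup.invRev v, by rw [evalWord, evalWord, ← FreeGroup.inv_mk, map_inv],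
    by simpa using hv⟩

lemma InBall.pow {g : BS q} {r : ℕ} (hg : InBall q g r) (j : ℕ) : InBall q (g ^ j) (j * r) := by
  induction j with
  | zero => exact ⟨[], by simp [evalWord, ← FreeGroup.one_eq_mk], Nat.zero_le _⟩
  | succ j ih => simpa [pow_succ, add_mul] using ih.mul hg

lemma inBall_of (x : Bool) : InBall q (PresentedGroup.of x) 1 := ⟨[(x, true)], rfl, le_rfl⟩

lemma isPathInBall_of_length_le_one {x y : BS q} {r : ℕ} {γ : List (Bool × Bool)}
    (hx : InBall q x r) (hy : InBall q y r) (hγ : γ.length ≤ 1) (hxy : x * evalWord q γ = y) :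
    IsPathInBall q x y r γ := by
  refine ⟨hxy, fun k => ?_⟩
  rcases k with _ | k
  · simpa [evalWord, ← FreeGroup.one_eq_mk] using hx
  · rwa [List.take_of_length_le (by omega), hxy]

end Ball

lemma bsT_mul_bsA_mul_inv (q : ℤ) : bsT q * bsA q * (bsT q)⁻¹ = bsA q ^ q :=
  mul_inv_eq_one.1 <| by
    simpa [bsT, bsA, PresentedGroup.of] using PresentedGroup.one_of_mem (rels := bsRel q) rfl

lemma bsT_pow_mul_bsA_mul_inv (q : ℤ) (j : ℕ) :
    bsT q ^ j * bsA q * (bsT q ^ j)⁻¹ = bsA q ^ q ^ j := by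
  induction j with
  | zero => simp
  | succ j ih =>
    rw [pow_succ', mul_inv_rev, show bsT q * bsT q ^ j * bsA q * ((bsT q ^ j)⁻¹ * (bsT q)⁻¹)
      = bsT q * (bsT q ^ j * bsA q * (bsT q ^ j)⁻¹) * (bsT q)⁻¹ by group, ih, ← conj_zpow,
      bsT_mul_bsA_mul_inv, ← zpow_mul, pow_succ']

lemma lift_letter_eq_one_of_mem_bsRel_two :
    ∀ r ∈ bsRel 2, FreeGroup.lift (fun x => letter (x, true)) r = 1 := by
  rintro r rfl
  ext <;> norm_num [letter, sq]

def toAff : BS 2 →* Aff2 := PresentedGroup.toGroup lift_letter_eq_one_of_mem_bsRel_two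

lemma toAff_evalWord (v : List (Bool × Bool)) : toAff (evalWord 2 v) = word v := by
  change FreeGroup.lift (fun x => letter (x, true)) (FreeGroup.mk v) = word v
  rw [FreeGroup.lift_mk, word]
  congr 1
  refine List.map_congr_left fun x _ => ?_
  obtain ⟨_ | _, _ | _⟩ := x <;> ext <;> simp [letter]

@[simp] lemma toAff_bsA : toAff (bsA 2) = ⟨1, 0⟩ := PresentedGroup.toGroup.of _

@[simp] lemma toAff_bsT : toAff (bsT 2) = ⟨0, 1⟩ := PresentedGroup.toGroup.of _

lemma toAff_bsA_pow (j : ℕ) : toAff (bsA 2 ^ j) = ⟨j, 0⟩ := by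
  induction j with
  | zero => rfl
  | succ j ih => ext <;> simp [pow_succ, ih]

lemma abs_toAff_m_le_of_inBall {g : BS 2} {n : ℕ} (hg : InBall 2 g (2 * n + 4))
    (hk : (toAff g).k ≤ 0) (hm : (toAff g).m ∉ zmultiples (2 : ℚ)) :
    |(toAff g).m| ≤ 3 * 2 ^ n + 1 := by
  obtain ⟨v, rfl, hv⟩ := hg
  rw [toAff_evalWord] at hk hm ⊢
  have hcount := countA_add_countT_add_countTInv v
  rw [word_k] at hk
  have key : countA v * 2 ^ countT v ≤ 3 * 2 ^ n + 2 ^ countT v := by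
    rcases (countA v).eq_zero_or_pos with h0 | hpos
    · simp [h0]
    · have := mul_two_pow_le_of_add_two_mul_le (a := countA v - 1) (U := countT v) (n := n)
        (by omega)
      rw [Nat.sub_one_mul] at this
      omega
  have := abs_word_m_add_le_of_not_mem hm
  have : ((countA v * 2 ^ countT v : ℕ) : ℚ) ≤ ((3 * 2 ^ n + 2 ^ countT v : ℕ) : ℚ) := by
    exact_mod_cast key
  push_cast at this
  linarith

def bsW (n : ℕ) : BS 2 := bsT 2 ^ n * bsA 2 ^ 2 * (bsT 2)⁻¹ ^ n

def bsU (n : ℕ) : BS 2 := bsA 2 * bsT 2 ^ n * bsA 2 ^ 2 * (bsT 2)⁻¹ ^ (n - 1)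

lemma bsW_eq (n : ℕ) : bsW n = bsA 2 ^ 2 ^ (n + 1) := by
  have h := bsT_pow_mul_bsA_mul_inv 2 n
  rw [bsW, inv_pow, ← conj_pow, h, ← zpow_natCast, ← zpow_mul, ← zpow_natCast]
  push_cast
  ring_nf

lemma bsU_eq {n : ℕ} (hn : 1 ≤ n) : bsU n = bsW n * (bsA 2 * bsT 2) := by
  obtain ⟨n, rfl⟩ := Nat.exists_eq_add_of_le' hn
  have h : bsU (n + 1) = bsA 2 * bsW (n + 1) * bsT 2 := by
    simp only [bsU, bsW, add_tsub_cancel_right]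
    group
  rw [h, ← mul_assoc, bsW_eq, ← pow_succ', ← pow_succ]

@[simp] lemma toAff_bsW (n : ℕ) : toAff (bsW n) = ⟨2 ^ (n + 1), 0⟩ := by
  rw [bsW_eq, toAff_bsA_pow]
  push_cast
  rfl

lemma inBall_bsW (n : ℕ) : InBall 2 (bsW n) (2 * n + 2) :=
  ((((inBall_of true).pow n).mul ((inBall_of false).pow 2)).mul
    ((inBall_of true).inv.pow n)).mono (by omega)

lemma inBall_bsU {n : ℕ} (hn : 1 ≤ n) : InBall 2 (bsU n) (2 * n + 2) :=
  (((((inBall_of false).mul ((inBall_of true).pow n)).mul ((inBall_of false).pow 2)).mul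
    ((inBall_of true).inv.pow (n - 1)))).mono (by omega)

lemma not_inBall_bsW_mul_bsA {n : ℕ} (hn : 1 ≤ n) : ¬ InBall 2 (bsW n * bsA 2) (2 * n + 2) := by
  intro h
  have hm : (toAff (bsW n * bsA 2)).m = 2 ^ (n + 1) + 1 := by simp
  have hodd : (2 : ℚ) ^ (n + 1) + 1 ∉ zmultiples (2 : ℚ) :=
    (add_mem_cancel_left (two_pow_succ_mem_zmultiples_two n)).not.2 one_not_mem_zmultiples_two
  have := abs_toAff_m_le_of_inBall (n := n - 1) (h.mono (by omega)) (by simp) (hm ▸ hodd)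
  rw [hm, abs_of_pos (by positivity)] at this
  obtain ⟨n, rfl⟩ := Nat.exists_eq_add_of_le' hn
  simp only [add_tsub_cancel_right, pow_succ] at this
  linarith [one_le_pow₀ (M₀ := ℚ) one_le_two (n := n)]

lemma onSphere_bsW {n : ℕ} (hn : 1 ≤ n) : OnSphere 2 (bsW n) (2 * n + 2) :=
  ⟨inBall_bsW n, fun h => not_inBall_bsW_mul_bsA hn ((h.mul (inBall_of false)).mono (by omega))⟩

lemma onSphere_bsU {n : ℕ} (hn : 1 ≤ n) : OnSphere 2 (bsU n) (2 * n + 2) := by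
  refine ⟨inBall_bsU hn, fun h => not_inBall_bsW_mul_bsA hn ?_⟩
  have hu : bsU n * (bsT 2)⁻¹ = bsW n * bsA 2 := by rw [bsU_eq hn]; group
  exact hu ▸ (h.mul (inBall_of true).inv).mono (by omega)

lemma bsW_mul_evalWord_eq_bsU {n : ℕ} (hn : 1 ≤ n) :
    bsW n * evalWord 2 [(false, true), (true, true)] = bsU n := by
  rw [bsU_eq hn]
  exact congrArg _ (evalWord_append [(false, true)] [(true, true)])

lemma countA_mul_two_pow_countT_le_append (v v' : List (Bool × Bool)) :
    countA v * 2 ^ countT v ≤ countA (v ++ v') * 2 ^ countT (v ++ v') := by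
  simp only [countA, countT, List.countP_append, List.count_append]
  gcongr <;> omega

lemma length_gt_of_isPathInBall {n : ℕ} (hn : 4 ≤ n) {δ : List (Bool × Bool)}
    (hδ : IsPathInBall 2 (bsW n) (bsU n) (2 * n + 2) δ) : 2 * n + 2 - 8 < δ.length := by
  obtain ⟨hend, hball⟩ := hδ
  have hword : word δ = ⟨1, 1⟩ := by
    rw [bsU_eq (by omega)] at hend
    rw [← toAff_evalWord, mul_left_cancel hend]
    ext <;> simp
  have hcount : countA δ + 2 * countT δ = δ.length + 1 := by
    have : (1 : ℤ) = countT δ - countTInv δ := by rw [← word_k, hword]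
    have := countA_add_countT_add_countTInv δ
    omega
  by_contra! hlen
  obtain ⟨p, b, s, rfl, hk, hodd⟩ :=
    exists_first_odd_letter (v := δ) (by rw [hword]; exact one_not_mem_zmultiples_two)
  rw [← List.singleton_append, ← List.append_assoc] at hcount hlen hball
  have hpos : InBall 2 (bsW n * evalWord 2 (p ++ [(false, b)])) (2 * n + 2) := by
    simpa only [List.take_left] using hball (p ++ [(false, b)]).length
  have hAff : toAff (bsW n * evalWord 2 (p ++ [(false, b)]))
      = ⟨2 ^ (n + 1) + (word (p ++ [(false, b)])).m, (word p).k⟩ := by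
    rw [map_mul, toAff_evalWord]
    ext <;> simp [letter]
  have hfar := abs_toAff_m_le_of_inBall (n := n - 1) (hpos.mono (by omega))
    (by rwa [hAff]) (by rwa [hAff, add_mem_cancel_left (two_pow_succ_mem_zmultiples_two n)])
  have hnear : |(word (p ++ [(false, b)])).m| ≤ ((3 * 2 ^ (n - 4) : ℕ) : ℚ) :=
    (abs_word_m_le _).trans <| by
      exact_mod_cast (countA_mul_two_pow_countT_le_append _ s).trans
        (mul_two_pow_le_of_add_two_mul_le (by omega))
  rw [hAff] at hfar
  obtain ⟨c, rfl⟩ := Nat.exists_eq_add_of_le' hn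
  rw [show c + 4 - 1 = c + 3 by omega] at hfar
  rw [show c + 4 - 4 = c by omega] at hnear
  push_cast at hnear
  simp only [pow_succ] at hfar
  linarith [abs_le.1 hfar, abs_le.1 hnear, one_le_pow₀ (M₀ := ℚ) one_le_two (n := c)]

lemma not_bsW_mul_evalWord_eq_bsU_of_length_le_one {n : ℕ} (hn : 4 ≤ n)
    {γ : List (Bool × Bool)} (hγ : γ.length ≤ 1) : bsW n * evalWord 2 γ ≠ bsU n := fun h =>
  have := length_gt_of_isPathInBall hn
    (isPathInBall_of_length_le_one (inBall_bsW n) (inBall_bsU (by omega)) hγ h)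
  by omega

lemma not_propertyP2_of_long_detours {q : ℤ} (x y : ℕ → BS q) (n₀ : ℕ)
    (h : ∀ n, n₀ < n → OnSphere q (x n) (2 * n + 2) ∧ OnSphere q (y n) (2 * n + 2) ∧
      (∃ γ : List (Bool × Bool), γ.length ≤ 2 ∧ x n * evalWord q γ = y n) ∧
      ∀ δ, IsPathInBall q (x n) (y n) (2 * n + 2) δ → 2 * n + 2 - 8 < δ.length) :
    ¬ PropertyP2 q := by
  rintro ⟨f, hf, r₀, hP⟩
  obtain ⟨M, hM⟩ := Filter.eventually_atTop.1 ((hf 1 one_pos).eventually_ge_atTop 9)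
  set n := n₀ + r₀ + M + 4
  obtain ⟨hx, hy, hγ, hlong⟩ := h n (by omega)
  obtain ⟨δ, hδ, hlen⟩ := hP (2 * n + 2) (by omega) _ _ hx hy hγ
  have hgap := hM (2 * n + 2) (by omega)
  have : ((2 * n + 2 : ℕ) : ℝ) ≤ δ.length + 7 := by exact_mod_cast (by have := hlong δ hδ; omega)
  linarith

/-- For every `n > 100` the elements `w = t^n a² t^(-n)` and
`u = a t^n a² t^(-(n-1))` of `BS(1,2)` lie on the sphere of radius `R = 2n+2`,
are at distance exactly 2, and every path between them inside the ball `B(R)`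
has length greater than `R - 8`; consequently `BS(1,2)` does not satisfy
Poénaru's condition `P(2)` with respect to `{a,a⁻¹,t,t⁻¹}`. -/
theorem bs12_not_P2 :
    (∀ n : ℕ, 100 < n →
      OnSphere 2 ((bsT 2) ^ n * (bsA 2) ^ 2 * ((bsT 2)⁻¹) ^ n) (2 * n + 2) ∧
      OnSphere 2 (bsA 2 * (bsT 2) ^ n * (bsA 2) ^ 2 * ((bsT 2)⁻¹) ^ (n - 1))
        (2 * n + 2) ∧
      (∃ γ : List (Bool × Bool), γ.length ≤ 2 ∧
        ((bsT 2) ^ n * (bsA 2) ^ 2 * ((bsT 2)⁻¹) ^ n) * evalWord 2 γ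
          = bsA 2 * (bsT 2) ^ n * (bsA 2) ^ 2 * ((bsT 2)⁻¹) ^ (n - 1)) ∧
      (¬ ∃ γ : List (Bool × Bool), γ.length ≤ 1 ∧
        ((bsT 2) ^ n * (bsA 2) ^ 2 * ((bsT 2)⁻¹) ^ n) * evalWord 2 γ
          = bsA 2 * (bsT 2) ^ n * (bsA 2) ^ 2 * ((bsT 2)⁻¹) ^ (n - 1)) ∧
      (∀ δ : List (Bool × Bool),
        IsPathInBall 2 ((bsT 2) ^ n * (bsA 2) ^ 2 * ((bsT 2)⁻¹) ^ n)
          (bsA 2 * (bsT 2) ^ n * (bsA 2) ^ 2 * ((bsT 2)⁻¹) ^ (n - 1))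
          (2 * n + 2) δ →
        2 * n + 2 - 8 < δ.length)) ∧
    ¬ PropertyP2 2 := by
  have hdist (n : ℕ) (hn : 1 ≤ n) : ∃ γ : List (Bool × Bool), γ.length ≤ 2 ∧
      bsW n * evalWord 2 γ = bsU n := ⟨_, le_rfl, bsW_mul_evalWord_eq_bsU hn⟩
  refine ⟨fun n hn => ⟨onSphere_bsW (by omega), onSphere_bsU (by omega), hdist n (by omega),
      fun ⟨_, hγ, h⟩ => not_bsW_mul_evalWord_eq_bsU_of_length_le_one (by omega) hγ h,
      fun _ => length_gt_of_isPathInBall (by omega)⟩, ?_⟩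
  exact not_propertyP2_of_long_detours bsW bsU 100 fun n hn =>
    ⟨onSphere_bsW (by omega), onSphere_bsU (by omega), hdist n (by omega),
      fun _ => length_gt_of_isPathInBall (by omega)⟩
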